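/- Let $g(\tau, x) := -\frac{\pi\tau}{2} - \frac{1}{2}\log(1 - e^{-\pi\tau + \pi i x}) - \frac{1}{2}\log(1 - e^{-\pi\tau - \pi i x})$ for $\Re\tau > 0$, using the principal branch of $\log$ on $\mathbb{C}\setminus(-\infty,0]$, extended by continuity to $\tau = it$ with $t, x$ real and $t \pm x \notin 2\mathbb{Z}$, giving $g(it,x) = -\frac{\pi i t}{2} - \frac{1}{2}\log(1 - e^{-\pi i(t+x)}) - \frac{1}{2}\log(1 - e^{-\pi i(t-x)})$. If $t, x \in \mathbb{R}$ satisfy $|t| < d_1(x) := \min_{m\in\mathbb{Z}}|x + 2m|$, then $g(it, x) = g(-it, -x)$, where $g(-it,-x)$ means the continuous boundary value $-\frac{\pi i(-t)}{2} - \frac{1}{2}\log(1-e^{-\pi i(-t-x)}) - \frac{1}{2}\log(1-e^{-\pi i(-t+x)})$; equivalently, $-\pi i t + \frac{1}{2}[L(-(t+x)) - L(t+x)] + \frac{1}{2}[L(-(t-x)) - L(t-x)] = 0$, where $L(y) := \log(1 - e^{-\pi i y})$ (principal branch). -/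
import Mathlib

/-- Distance from `ξ` to the lattice `2ℤ`. -/
noncomputable def d1 (ξ : ℝ) : ℝ := ⨅ m : ℤ, |ξ + 2 * (m : ℝ)|

/-- `L(y) = log(1 - e^{-πiy})`, with the principal branch of the logarithm. -/
noncomputable def Lfun (y : ℝ) : ℂ :=
  Complex.log (1 - Complex.exp (-(Real.pi : ℂ) * Complex.I * (y : ℂ)))

open Complex Real

lemma Lfun_periodic (y : ℝ) (k : ℤ) : Lfun (y + 2 * k) = Lfun y := by
  unfold Lfun
  congr 2
  push_cast
  rw [mul_add, Complex.exp_add]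
  have : Complex.exp (-(Real.pi : ℂ) * Complex.I * (2 * k)) = 1 := by
    have := Complex.exp_int_mul_two_pi_mul_I (-k)
    rw [show ((-k : ℤ) : ℂ) * (2 * Real.pi * Complex.I)
        = -(Real.pi : ℂ) * Complex.I * (2 * k) by push_cast; ring] at this
    exact this
  rw [this, mul_one]

lemma Ldiff (y : ℝ) (h0 : 0 < y) (h2 : y < 2) :
    Lfun (-y) - Lfun y = (Real.pi : ℂ) * Complex.I * (y - 1) := by
  set z : ℂ := 1 - Complex.exp (-(Real.pi : ℂ) * Complex.I * (y : ℂ)) with hz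
  set s : ℝ := 2 * Real.sin (Real.pi * y / 2) with hs
  set φ : ℝ := Real.pi / 2 - Real.pi * y / 2 with hφ
  have hsin : 0 < Real.sin (Real.pi * y / 2) := by
    apply Real.sin_pos_of_pos_of_lt_pi
    · positivity
    · nlinarith [Real.pi_pos]
  have hspos : 0 < s := by positivity
  have hφmem : φ ∈ Set.Ioc (-Real.pi) Real.pi := by
    constructor
    · rw [hφ]; nlinarith [Real.pi_pos]
    · rw [hφ]; nlinarith [Real.pi_pos]
  have hc2 := Real.cos_two_mul (Real.pi * y / 2)
  rw [show 2 * (Real.pi * y / 2) = Real.pi * y by ring] at hc2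
  have hs2 := Real.sin_two_mul (Real.pi * y / 2)
  rw [show 2 * (Real.pi * y / 2) = Real.pi * y by ring] at hs2
  have hpyth := Real.sin_sq_add_cos_sq (Real.pi * y / 2)
  have hzeq : z = (s : ℂ) * (Complex.cos (φ : ℂ) + Complex.sin (φ : ℂ) * Complex.I) := by
    rw [hz, show -(Real.pi : ℂ) * Complex.I * (y : ℂ) = ((-(Real.pi * y) : ℝ) : ℂ) * Complex.I by
      push_cast; ring, Complex.exp_mul_I]
    rw [← Complex.ofReal_cos, ← Complex.ofReal_sin, ← Complex.ofReal_cos, ← Complex.ofReal_sin]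
    have hc : Real.cos (-(Real.pi * y)) = 1 - s * Real.cos φ := by
      rw [Real.cos_neg, hs, hφ, Real.cos_pi_div_two_sub]
      nlinarith [hc2, hpyth]
    have hsn : Real.sin (-(Real.pi * y)) = -(s * Real.sin φ) := by
      rw [Real.sin_neg, hs, hφ, Real.sin_pi_div_two_sub]
      linarith [hs2]
    rw [hc, hsn]
    push_cast
    ring
  have harg : z.arg = φ := by rw [hzeq]; exact Complex.arg_mul_cos_add_sin_mul_I hspos hφmem
  have hargne : z.arg ≠ Real.pi := by
    rw [harg]; intro hcon; rw [hφ] at hcon; nlinarith [Real.pi_pos]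
  have hconj : Lfun (-y) = (starRingEnd ℂ) (Lfun y) := by
    unfold Lfun
    rw [← hz, ← Complex.log_conj _ hargne]
    congr 1
    rw [hz, map_sub, map_one, ← Complex.exp_conj]
    congr 1
    simp [Complex.conj_I]
  rw [hconj]
  unfold Lfun
  rw [← hz]
  rw [show (starRingEnd ℂ) (Complex.log z) - Complex.log z
      = -((Complex.log z) - (starRingEnd ℂ) (Complex.log z)) by ring,
    Complex.sub_conj, Complex.log_im, harg, hφ]
  push_cast
  ring

/-- Locality of the Green's function on the cylinder: if `|t| < d₁(x)` (spacelike
separation), then `g(it, x) = g(-it, -x)`; equivalently,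
`-πit + ½[L(-(t+x)) - L(t+x)] + ½[L(-(t-x)) - L(t-x)] = 0`. -/
theorem stmt_17 (t x : ℝ) (h : |t| < d1 x) :
    -(Real.pi : ℂ) * Complex.I * (t : ℂ)
      + (1 / 2 : ℂ) * (Lfun (-(t + x)) - Lfun (t + x))
      + (1 / 2 : ℂ) * (Lfun (-(t - x)) - Lfun (t - x)) = 0 := by
  have hbdd : BddBelow (Set.range fun m : ℤ => |x + 2 * (m : ℝ)|) := by
    refine ⟨0, ?_⟩
    rintro _ ⟨m, rfl⟩
    positivity
  set k : ℤ := round (x / 2) with hk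
  set x' : ℝ := x - 2 * (k : ℝ) with hx'
  have hd : d1 x ≤ |x'| := by
    have h1 : d1 x ≤ |x + 2 * ((-k : ℤ) : ℝ)| := ciInf_le hbdd (-k)
    rwa [show x + 2 * ((-k : ℤ) : ℝ) = x' by push_cast [hx']; ring] at h1
  have hx1 : |x'| ≤ 1 := by
    have h2 : |x / 2 - round (x / 2)| ≤ 1 / 2 := abs_sub_round (x / 2)
    have : |x'| = 2 * |x / 2 - (k : ℝ)| := by
      rw [hx', show x - 2 * (k : ℝ) = 2 * (x / 2 - (k : ℝ)) by ring, abs_mul]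
      norm_num
    rw [this, hk]
    linarith
  have ht : |t| < |x'| := lt_of_lt_of_le h hd
  have e1 : Lfun (t + x) = Lfun (t + x') := by
    have := Lfun_periodic (t + x') k
    rwa [show t + x' + 2 * (k : ℝ) = t + x by rw [hx']; ring] at this
  have e2 : Lfun (-(t + x)) = Lfun (-(t + x')) := by
    have := Lfun_periodic (-(t + x')) (-k)
    rwa [show -(t + x') + 2 * ((-k : ℤ) : ℝ) = -(t + x) by push_cast [hx']; ring] at this
  have e3 : Lfun (t - x) = Lfun (t - x') := by
    have := Lfun_periodic (t - x') (-k)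
    rwa [show t - x' + 2 * ((-k : ℤ) : ℝ) = t - x by push_cast [hx']; ring] at this
  have e4 : Lfun (-(t - x)) = Lfun (-(t - x')) := by
    have := Lfun_periodic (-(t - x')) k
    rwa [show -(t - x') + 2 * (k : ℝ) = -(t - x) by rw [hx']; ring] at this
  rw [e1, e2, e3, e4]
  have htabs := abs_lt.mp ht
  rcases lt_or_ge 0 x' with hpos | hneg
  · have habs : |x'| = x' := abs_of_pos hpos
    rw [habs] at ht hx1 htabs
    have hA := Ldiff (t + x') (by linarith [htabs.1]) (by linarith [htabs.2])
    have hB := Ldiff (x' - t) (by linarith [htabs.2]) (by linarith [htabs.1])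
    rw [show (-(x' - t) : ℝ) = t - x' by ring] at hB
    rw [show (-(t - x') : ℝ) = x' - t by ring]
    push_cast at hA hB ⊢
    linear_combination (1 / 2 : ℂ) * hA - (1 / 2 : ℂ) * hB
  · have hxneg : x' < 0 := by
      rcases lt_or_eq_of_le hneg with h' | h'
      · exact h'
      · exfalso; rw [h', abs_zero] at ht; exact absurd ht (abs_nonneg t).not_gt
    have habs : |x'| = -x' := abs_of_neg hxneg
    rw [habs] at ht hx1 htabs
    have hA := Ldiff (-(t + x')) (by linarith [htabs.2]) (by linarith [htabs.1])
    rw [show (-(-(t + x')) : ℝ) = t + x' by ring] at hA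
    have hB := Ldiff (t - x') (by linarith [htabs.1]) (by linarith [htabs.2])
    push_cast at hA hB ⊢
    linear_combination -(1 / 2 : ℂ) * hA + (1 / 2 : ℂ) * hB
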